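/- Let N be a normal closed subset of a hypergroup H, and let F be a closed subset of H containing N. Then F//N is strongly normal in H//N if and only if F is strongly normal in H. -/

import Mathlib

/-- A hypergroup: a set with a hypermultiplication, identity and involution
satisfying (H1), (H2), (H3). -/
structure Hypergroup (H : Type*) where
  hmul : H → H → Set H
  one : H
  star : H → H
  assoc : ∀ p q r : H, (⋃ x ∈ hmul q r, hmul p x) = ⋃ x ∈ hmul p q, hmul x r
  hmul_one : ∀ s : H, hmul s one = {s}
  inv_left : ∀ p q r : H, r ∈ hmul p q → q ∈ hmul (star p) r
  inv_right : ∀ p q r : H, r ∈ hmul p q → p ∈ hmul r (star q)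

namespace Hypergroup

variable {H : Type*} (G : Hypergroup H)

/-- Complex (set) product: `AB = ⋃_{a ∈ A, b ∈ B} ab`. -/
def smul (A B : Set H) : Set H := ⋃ a ∈ A, ⋃ b ∈ B, G.hmul a b

/-- `A* = { a* | a ∈ A }`. -/
def sstar (A : Set H) : Set H := G.star '' A

/-- A nonempty subset `F` is closed if `F*F ⊆ F`. -/
def IsClosed (F : Set H) : Prop := F.Nonempty ∧ G.smul (G.sstar F) F ⊆ F

/-- `F` is normal in `K`: `Fk ⊆ kF` for all `k ∈ K`. -/
def IsNormalIn (F K : Set H) : Prop := ∀ k ∈ K, G.smul F {k} ⊆ G.smul {k} F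

/-- `F` is strongly normal in `K`: `k*Fk ⊆ F` for all `k ∈ K`. -/
def IsStronglyNormalIn (F K : Set H) : Prop :=
  ∀ k ∈ K, G.smul (G.smul {G.star k} F) {k} ⊆ F

/-- An element `s` is thin if `s*s = {1}`. -/
def IsThinElem (s : H) : Prop := G.hmul (G.star s) s = {G.one}

/-- A hypergroup is thin if all elements are thin. -/
def IsThin : Prop := ∀ s : H, G.IsThinElem s

/-- The center `Z(H) = {h | hx = xh for all x, h*h = {1}}`. -/
def center : Set H :=
  {h | (∀ x : H, G.hmul h x = G.hmul x h) ∧ G.hmul (G.star h) h = {G.one}}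

/-- The class `h^F := FhF`. -/
def cls (F : Set H) (h : H) : Set H := G.smul (G.smul F {h}) F

/-- The quotient set `H//F := { h^F | h ∈ H }`. -/
def quotSet (F : Set H) : Set (Set H) := Set.range (G.cls F)

/-- The class `h^F` as an element of `H//F`. -/
def qcls (F : Set H) (h : H) : G.quotSet F := ⟨G.cls F h, h, rfl⟩

/-- The full preimage in `H` of the center of the quotient `H//T`:
`{h | h^T ∈ Z(H//T)}`, i.e. `h^T` commutes with all classes `y^T` and
`(h^T)*(h^T) = {1^T} = {T}`. -/
def qCenterPre (T : Set H) : Set H :=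
  {h | (∀ y : H, G.cls T '' (G.smul (G.smul {h} T) {y}) =
          G.cls T '' (G.smul (G.smul {y} T) {h})) ∧
       G.cls T '' (G.smul (G.smul {G.star h} T) {h}) = {T}}

/-- The upper central series: `Z₀(H) = {1}`, and `Zᵢ₊₁(H)` is the full preimage
of `Z(H//Zᵢ(H))`, i.e. `Zᵢ₊₁(H)//Zᵢ(H) = Z(H//Zᵢ(H))`. -/
def upperCentral : ℕ → Set H
  | 0 => {G.one}
  | n + 1 => G.qCenterPre (upperCentral n)

/-- A hypergroup is weakly nilpotent if `Zₙ(H) = H` for some `n`. -/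
def WeaklyNilpotent : Prop := ∃ n : ℕ, G.upperCentral n = Set.univ

/-- `F` is subnormal in `K` via a chain of successively normal closed subsets. -/
def IsSubnormalIn (F K : Set H) : Prop :=
  ∃ n : ℕ, ∃ C : ℕ → Set H, C 0 = F ∧ C n = K ∧
    ∀ i < n, C i ⊆ C (i + 1) ∧ G.IsClosed (C (i + 1)) ∧ G.IsNormalIn (C i) (C (i + 1))

/-- The quotient `K//N` is thin: `(k^N)*(k^N) = {1^N}` for all `k ∈ K`. -/
def QuotThin (N K : Set H) : Prop :=
  ∀ k ∈ K, G.cls N '' (G.smul (G.smul {G.star k} N) {k}) = {N}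

/-- A residually-thin chain from `{1}` to `K`. -/
def RTChainOn (K : Set H) (n : ℕ) (C : ℕ → Set H) : Prop :=
  C 0 = {G.one} ∧ C n = K ∧
    ∀ i < n, C i ⊆ C (i + 1) ∧ G.IsClosed (C (i + 1)) ∧ G.QuotThin (C i) (C (i + 1))

/-- The valency `n_K = ∏ |Cᵢ₊₁//Cᵢ|` computed along some RT chain for `K`. -/
def HasValencyOn (K : Set H) (m : ℕ) : Prop :=
  ∃ n C, G.RTChainOn K n C ∧
    m = ∏ i ∈ Finset.range n, Nat.card (G.cls (C i) '' C (i + 1))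

/-- A closed `p`-subset: a closed subset whose valency is a power of `p`. -/
def PSubsetOn (p : ℕ) (K : Set H) : Prop :=
  G.IsClosed K ∧ ∃ m k : ℕ, G.HasValencyOn K m ∧ m = p ^ k

/-- `h` is `p`-valenced in `K`: for every subnormal closed `p`-subset `U` of `K`
such that `(h*)^U h^U` consists of thin elements of the quotient,
`n_{(h*)^U h^U} = |(h*)^U h^U|` is a power of `p`. -/
def PValencedElemOn (p : ℕ) (K : Set H) (h : H) : Prop :=
  ∀ U : Set H, G.IsClosed U → U ⊆ K → G.IsSubnormalIn U K → G.PSubsetOn p U →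
    (∀ x ∈ G.smul (G.smul {G.star h} U) {h},
      G.cls U '' (G.smul (G.smul {G.star x} U) {x}) = {U}) →
    ∃ k : ℕ, Nat.card (G.cls U '' (G.smul (G.smul {G.star h} U) {h})) = p ^ k

/-- `K` is `p`-valenced if all its elements are. -/
def PValencedOn (p : ℕ) (K : Set H) : Prop := ∀ h ∈ K, G.PValencedElemOn p K h

end Hypergroup

/-!
Since `N ⊆ F`, `1 ∈ N` and `F` is closed, `NFN = F`; in particular `F` is a union of classes
`f^N`, so `x^N ∈ F//N` exactly when `x ∈ F`. By definition of the quotient multiplication,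
`(k^N)* (F//N) k^N` is the image of `k*NFNk = k*Fk` in `H//N`, and the two strong normality
conditions become the same inclusion.
-/

namespace Hypergroup

variable {H : Type*} (G : Hypergroup H)

lemma mem_smul {A B : Set H} {x : H} :
    x ∈ G.smul A B ↔ ∃ a ∈ A, ∃ b ∈ B, x ∈ G.hmul a b := by
  simp [smul]

lemma smul_mono {A A' B B' : Set H} (hA : A ⊆ A') (hB : B ⊆ B') :
    G.smul A B ⊆ G.smul A' B' :=
  Set.biUnion_mono hA fun _ _ => Set.biUnion_mono hB fun _ _ => subset_rfl

lemma smul_assoc (A B C : Set H) :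
    G.smul (G.smul A B) C = G.smul A (G.smul B C) := by
  ext x
  simp only [smul, Set.mem_iUnion, exists_prop]
  constructor
  · rintro ⟨y, ⟨a, ha, b, hb, hy⟩, c, hc, hx⟩
    have : x ∈ ⋃ y ∈ G.hmul a b, G.hmul y c := Set.mem_biUnion hy hx
    rw [← G.assoc] at this
    obtain ⟨z, hz, hx⟩ := Set.mem_iUnion₂.mp this
    exact ⟨a, ha, z, ⟨b, hb, c, hc, hz⟩, hx⟩
  · rintro ⟨a, ha, z, ⟨b, hb, c, hc, hz⟩, hx⟩
    have : x ∈ ⋃ z ∈ G.hmul b c, G.hmul a z := Set.mem_biUnion hz hx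
    rw [G.assoc] at this
    obtain ⟨y, hy, hx⟩ := Set.mem_iUnion₂.mp this
    exact ⟨y, ⟨a, ha, b, hb, hy⟩, c, hc, hx⟩

lemma mem_hmul_one (a : H) : a ∈ G.hmul a G.one := by
  rw [G.hmul_one]
  rfl

lemma one_mem_star_hmul (a : H) : G.one ∈ G.hmul (G.star a) a :=
  G.inv_left _ _ _ (G.mem_hmul_one a)

lemma star_star (a : H) : G.star (G.star a) = a := by
  have h := G.inv_left _ _ _ (G.one_mem_star_hmul a)
  rw [G.hmul_one] at h
  exact h.symm

lemma mem_one_hmul (a : H) : a ∈ G.hmul G.one a := by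
  simpa [G.star_star] using G.inv_right _ _ _ (G.one_mem_star_hmul (G.star a))

lemma subset_smul_right {N : Set H} (h1 : G.one ∈ N) (A : Set H) : A ⊆ G.smul A N :=
  fun a ha => G.mem_smul.mpr ⟨a, ha, G.one, h1, G.mem_hmul_one a⟩

lemma subset_smul_left {N : Set H} (h1 : G.one ∈ N) (A : Set H) : A ⊆ G.smul N A :=
  fun a ha => G.mem_smul.mpr ⟨G.one, h1, a, ha, G.mem_one_hmul a⟩

namespace IsClosed

variable {G} {F : Set H} (hF : G.IsClosed F)
include hF

lemma one_mem : G.one ∈ F := by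
  obtain ⟨a, ha⟩ := hF.1
  exact hF.2 (G.mem_smul.mpr ⟨G.star a, ⟨a, ha, rfl⟩, a, ha, G.one_mem_star_hmul a⟩)

lemma star_mem {a : H} (ha : a ∈ F) : G.star a ∈ F :=
  hF.2 (G.mem_smul.mpr ⟨G.star a, ⟨a, ha, rfl⟩, G.one, hF.one_mem, G.mem_hmul_one _⟩)

lemma smul_subset {A B : Set H} (hA : A ⊆ F) (hB : B ⊆ F) : G.smul A B ⊆ F := by
  rintro x hx
  obtain ⟨a, ha, b, hb, hx⟩ := G.mem_smul.mp hx
  refine hF.2 (G.mem_smul.mpr ⟨G.star (G.star a), ⟨G.star a, hF.star_mem (hA ha), rfl⟩, b, hB hb, ?_⟩)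
  rwa [G.star_star]

lemma smul_smul_eq {N : Set H} (h1 : G.one ∈ N) (hNF : N ⊆ F) :
    G.smul (G.smul N F) N = F :=
  (hF.smul_subset (hF.smul_subset hNF subset_rfl) hNF).antisymm
    ((G.subset_smul_left h1 F).trans (G.subset_smul_right h1 _))

lemma cls_subset {N : Set H} (hNF : N ⊆ F) {f : H} (hf : f ∈ F) : G.cls N f ⊆ F :=
  hF.smul_subset (hF.smul_subset hNF (Set.singleton_subset_iff.mpr hf)) hNF

end IsClosed

lemma mem_cls_self {N : Set H} (h1 : G.one ∈ N) (x : H) : x ∈ G.cls N x :=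
  G.subset_smul_right h1 _ (G.subset_smul_left h1 _ rfl)

lemma qcls_surjective (N : Set H) : Function.Surjective (G.qcls N) := by
  rintro ⟨_, x, rfl⟩
  exact ⟨x, rfl⟩

lemma preimage_image_qcls {N F : Set H} (h1 : G.one ∈ N) (hF : G.IsClosed F) (hNF : N ⊆ F) :
    G.qcls N ⁻¹' (G.qcls N '' F) = F := by
  refine (Set.subset_preimage_image _ _).antisymm' ?_
  rintro x ⟨f, hf, hfx⟩
  have hcls : G.cls N f = G.cls N x := congrArg Subtype.val hfx
  exact hF.cls_subset hNF hf (hcls ▸ G.mem_cls_self h1 x)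

section Quotient

variable {G} {N : Set H} {Q : Hypergroup (G.quotSet N)}

lemma smul_image_qcls
    (hmul : ∀ a b : H, Q.hmul (G.qcls N a) (G.qcls N b) =
      {x : G.quotSet N | ∃ y ∈ G.smul (G.smul {a} N) {b}, x = G.qcls N y})
    (A B : Set H) :
    Q.smul (G.qcls N '' A) (G.qcls N '' B) = G.qcls N '' G.smul (G.smul A N) B := by
  ext X
  constructor
  · intro hX
    obtain ⟨_, ⟨a, ha, rfl⟩, _, ⟨b, hb, rfl⟩, hX⟩ := Q.mem_smul.mp hX
    rw [hmul] at hX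
    obtain ⟨y, hy, rfl⟩ := hX
    exact ⟨y, G.smul_mono (G.smul_mono (Set.singleton_subset_iff.mpr ha) subset_rfl)
      (Set.singleton_subset_iff.mpr hb) hy, rfl⟩
  · rintro ⟨y, hy, rfl⟩
    obtain ⟨u, hu, b, hb, hy⟩ := G.mem_smul.mp hy
    obtain ⟨a, ha, n, hn, hu⟩ := G.mem_smul.mp hu
    refine Q.mem_smul.mpr ⟨G.qcls N a, ⟨a, ha, rfl⟩, G.qcls N b, ⟨b, hb, rfl⟩, ?_⟩
    rw [hmul]
    exact ⟨y, G.mem_smul.mpr ⟨u, G.mem_smul.mpr ⟨a, rfl, n, hn, hu⟩, b, rfl, hy⟩, rfl⟩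

end Quotient

end Hypergroup

theorem quot_stronglyNormal_iff_general {H : Type*} (G : Hypergroup H) (N F : Set H)
    (hN : G.IsClosed N)
    (hF : G.IsClosed F) (hNF : N ⊆ F)
    (Q : Hypergroup (G.quotSet N))
    (hmul : ∀ a b : H, Q.hmul (G.qcls N a) (G.qcls N b) =
      {x : G.quotSet N | ∃ y ∈ G.smul (G.smul {a} N) {b}, x = G.qcls N y})
    (hstar : ∀ h : H, Q.star (G.qcls N h) = G.qcls N (G.star h)) :
    Q.IsStronglyNormalIn (G.qcls N '' F) Set.univ ↔
      G.IsStronglyNormalIn F Set.univ := by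
  have h1 : G.one ∈ N := hN.one_mem
  have hconj : ∀ k : H,
      Q.smul (Q.smul {Q.star (G.qcls N k)} (G.qcls N '' F)) {G.qcls N k} =
        G.qcls N '' G.smul (G.smul {G.star k} F) {k} := by
    intro k
    rw [hstar, ← Set.image_singleton (f := G.qcls N) (a := G.star k),
      ← Set.image_singleton (f := G.qcls N) (a := k), Hypergroup.smul_image_qcls hmul,
      Hypergroup.smul_image_qcls hmul, G.smul_assoc (G.smul _ N), G.smul_assoc _ N,
      ← G.smul_assoc N, hF.smul_smul_eq h1 hNF]
  simp only [Hypergroup.IsStronglyNormalIn, Set.mem_univ, forall_const,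
    (G.qcls_surjective N).forall, hconj, Set.image_subset_iff,
    G.preimage_image_qcls h1 hF hNF]

/-- if `N` is a normal closed subset of `H` and `N ⊆ F` with `F`
closed, then `F//N` is strongly normal in `H//N` iff `F` is strongly normal
in `H`.  Here `Q` is the quotient hypergroup structure on `H//N`. -/
theorem quot_stronglyNormal_iff {H : Type*} (G : Hypergroup H) (N F : Set H)
    (hN : G.IsClosed N) (hNnormal : G.IsNormalIn N Set.univ)
    (hF : G.IsClosed F) (hNF : N ⊆ F)
    (Q : Hypergroup (G.quotSet N))
    (hmul : ∀ a b : H, Q.hmul (G.qcls N a) (G.qcls N b) =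
      {x : G.quotSet N | ∃ y ∈ G.smul (G.smul {a} N) {b}, x = G.qcls N y})
    (hone : Q.one = G.qcls N G.one)
    (hstar : ∀ h : H, Q.star (G.qcls N h) = G.qcls N (G.star h)) :
    Q.IsStronglyNormalIn (G.qcls N '' F) Set.univ ↔
      G.IsStronglyNormalIn F Set.univ :=
  quot_stronglyNormal_iff_general G N F hN hF hNF Q hmul hstar
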